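/- arXiv:2203.02425 — 2 statements merged into one kernel-verified Lean document; each statement's English description precedes it below -/
import Mathlib

section
/- Abstract Alessandrini identity: Let H be a real Hilbert space, V ⊂ H closed, and B₁, B₂ : H × H → R bounded bilinear forms coercive on V. Let f, g ∈ H, let u_f solve B₁(u_f, ·) = 0 on V with u_f − f ∈ V, and let u_g^* solve B₂^*(u_g^*, ·) = 0 on V with u_g^* − g ∈ V, where B₂^*(u,v) = B₂(v,u). Then (Λ_{B₁} − Λ_{B₂})[f][g] = (B₁ − B₂)(u_f, u_g^*). -/
/-- The left-hand side is `(Λ_{B₁} - Λ_{B₂})[f][g]`, read through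
`Λ_{B₁}[f][g] = B₁(u_f, g)` and `Λ_{B₂}[f][g] = B₂^*(u_g^*, f) = B₂(f, u_g^*)`. -/
theorem abstract_alessandrini_general {H : Type*} [NormedAddCommGroup H]
    [InnerProductSpace ℝ H]
    (V : Submodule ℝ H)
    (B₁ B₂ : H →L[ℝ] H →L[ℝ] ℝ)
    (f g uf ug : H)
    (huf : uf - f ∈ V) (huf0 : ∀ φ ∈ V, B₁ uf φ = 0)
    (hug : ug - g ∈ V) (hug0 : ∀ φ ∈ V, B₂ φ ug = 0) :
    B₁ uf g - B₂ f ug = B₁ uf ug - B₂ uf ug := by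
  -- Each boundary datum may be replaced by its solution, since they differ by a test function.
  have hg : B₁ uf g = B₁ uf ug := by
    rw [eq_comm, ← sub_eq_zero, ← map_sub]
    exact huf0 _ hug
  have hf : B₂ f ug = B₂ uf ug := by
    rw [eq_comm, ← sub_eq_zero, ← sub_apply, ← map_sub]
    exact hug0 _ huf
  rw [hg, hf]

/-- Abstract Alessandrini identity. With `Λ_{B₁}[f][g] = B₁(u_f, g)`
and `Λ_{B₂}[f][g] = B₂^*(u_g^*, f) = B₂(f, u_g^*)`, where `u_f` solves `B₁(u_f, ·) = 0`
on `V` with `u_f - f ∈ V` and `u_g^*` solves `B₂^*(u_g^*, ·) = 0` on `V` with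
`u_g^* - g ∈ V`, one has `(Λ_{B₁} - Λ_{B₂})[f][g] = (B₁ - B₂)(u_f, u_g^*)`. -/
theorem abstract_alessandrini {H : Type*} [NormedAddCommGroup H]
    [InnerProductSpace ℝ H] [CompleteSpace H]
    (V : Submodule ℝ H) (hV : IsClosed (V : Set H))
    (B₁ B₂ : H →L[ℝ] H →L[ℝ] ℝ)
    (c₁ : ℝ) (hc₁ : 0 < c₁) (hcoer₁ : ∀ v ∈ V, c₁ * ‖v‖ ^ 2 ≤ B₁ v v)
    (c₂ : ℝ) (hc₂ : 0 < c₂) (hcoer₂ : ∀ v ∈ V, c₂ * ‖v‖ ^ 2 ≤ B₂ v v)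
    (f g uf ug : H)
    (huf : uf - f ∈ V) (huf0 : ∀ φ ∈ V, B₁ uf φ = 0)
    (hug : ug - g ∈ V) (hug0 : ∀ φ ∈ V, B₂ φ ug = 0) :
    B₁ uf g - B₂ f ug = B₁ uf ug - B₂ uf ug :=
  abstract_alessandrini_general V B₁ B₂ f g uf ug huf huf0 hug hug0
end

section
/- Abstract Runge approximation: Let H be a real Hilbert space, V ⊂ H a closed subspace, W ⊂ H a subspace, and B = L + q with L, q : H × H → R bounded bilinear forms, B coercive on V. Assume: (a) q(w, φ) = 0 for all w ∈ W, φ ∈ V (locality/disjoint support hypothesis); (b) for every φ ∈ V, if L(w, φ) = 0 for all w ∈ W then φ = 0 (right UCP hypothesis). For f ∈ W let u_f be the unique solution with u_f − f ∈ V and B(u_f, ·) = 0 on V. Then the set R = { u_f − f : f ∈ W } is dense in V. -/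
/-!
By coercivity solutions are unique, so `f ↦ sol f - f` is linear on `W` and its image `R` is a
subspace of `V`; it is dense in `V` as soon as no nonzero `φ ∈ V` is orthogonal to `R`. Given such
a `φ`, Lax–Milgram for the transpose of `B = L + q` on `V` yields `ψ ∈ V` with
`⟪φ, u⟫ = B(u, ψ)` for `u ∈ V`. Testing with `u = sol f - f` and using `B(sol f, ψ) = 0` and
locality gives `L(f, ψ) = 0` for every `f ∈ W`, so `ψ = 0` by unique continuation, and then
`⟪φ, φ⟫ = B(φ, 0) = 0`.
-/

open RealInnerProductSpace

section Coercive

variable {E : Type*} [NormedAddCommGroup E] [NormedSpace ℝ E]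
  {B : E →L[ℝ] E →L[ℝ] ℝ} {V W : Submodule ℝ E} {c : ℝ}

theorem eq_zero_of_coercive_of_forall_apply_eq_zero (hc : 0 < c)
    (hcoer : ∀ v ∈ V, c * ‖v‖ ^ 2 ≤ B v v) {x : E} (hx : x ∈ V) (hBx : ∀ φ ∈ V, B x φ = 0) :
    x = 0 := by
  have : c * ‖x‖ ^ 2 ≤ 0 := hBx x hx ▸ hcoer x hx
  simpa using nonpos_of_mul_nonpos_right this hc

variable {sol : E → E} (hc : 0 < c) (hcoer : ∀ v ∈ V, c * ‖v‖ ^ 2 ≤ B v v)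
  (hsol : ∀ f ∈ W, sol f - f ∈ V ∧ ∀ φ ∈ V, B (sol f) φ = 0)
include hc hcoer hsol

theorem solution_add {f g : E} (hf : f ∈ W) (hg : g ∈ W) : sol (f + g) = sol f + sol g := by
  obtain ⟨hfV, hfB⟩ := hsol f hf
  obtain ⟨hgV, hgB⟩ := hsol g hg
  obtain ⟨hfgV, hfgB⟩ := hsol (f + g) (W.add_mem hf hg)
  refine sub_eq_zero.mp (eq_zero_of_coercive_of_forall_apply_eq_zero hc hcoer ?_ fun φ hφ => ?_)
  · convert V.sub_mem hfgV (V.add_mem hfV hgV) using 1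
    abel
  · simp [hfgB φ hφ, hfB φ hφ, hgB φ hφ]

theorem solution_smul (a : ℝ) {f : E} (hf : f ∈ W) : sol (a • f) = a • sol f := by
  obtain ⟨hfV, hfB⟩ := hsol f hf
  obtain ⟨hafV, hafB⟩ := hsol (a • f) (W.smul_mem a hf)
  refine sub_eq_zero.mp (eq_zero_of_coercive_of_forall_apply_eq_zero hc hcoer ?_ fun φ hφ => ?_)
  · convert V.sub_mem hafV (V.smul_mem a hfV) using 1
    rw [smul_sub]; abel
  · simp [hafB φ hφ, hfB φ hφ]

theorem exists_submodule_coe_eq_solution_sub :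
    ∃ R : Submodule ℝ E, (R : Set E) = {x | ∃ f ∈ W, x = sol f - f} :=
  ⟨{ carrier := {x | ∃ f ∈ W, x = sol f - f}
     add_mem' := by
       rintro _ _ ⟨f, hf, rfl⟩ ⟨g, hg, rfl⟩
       exact ⟨f + g, W.add_mem hf hg, by rw [solution_add hc hcoer hsol hf hg]; abel⟩
     zero_mem' := ⟨0, W.zero_mem, by
       simpa using (solution_smul hc hcoer hsol 0 W.zero_mem).symm⟩
     smul_mem' := by
       rintro a _ ⟨f, hf, rfl⟩
       exact ⟨a • f, W.smul_mem a hf, by rw [solution_smul hc hcoer hsol a hf, smul_sub]⟩ }, rfl⟩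

end Coercive

section Hilbert

variable {E : Type*} [NormedAddCommGroup E] [InnerProductSpace ℝ E] [CompleteSpace E]
  {V : Submodule ℝ E}

theorem Submodule.le_topologicalClosure_of_inf_orthogonal_eq_bot {N : Submodule ℝ E}
    (hV : IsClosed (V : Set E)) (hNV : N ≤ V) (h : Nᗮ ⊓ V = ⊥) : V ≤ N.topologicalClosure := by
  have hMV : N.topologicalClosure ≤ V := N.topologicalClosure_minimal hNV hV
  have := Submodule.sup_orthogonal_inf_of_hasOrthogonalProjection hMV
  rw [Submodule.orthogonal_closure, h, sup_bot_eq] at this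
  exact this.ge

theorem exists_mem_forall_inner_eq_of_coercive {B : E →L[ℝ] E →L[ℝ] ℝ} {c : ℝ}
    (hV : IsClosed (V : Set E)) (hc : 0 < c) (hcoer : ∀ v ∈ V, c * ‖v‖ ^ 2 ≤ B v v)
    {φ : E} (hφ : φ ∈ V) : ∃ ψ ∈ V, ∀ u ∈ V, ⟪φ, u⟫ = B u ψ := by
  have := hV.completeSpace_coe
  set Bt : V →L[ℝ] V →L[ℝ] ℝ := (B.comp V.subtypeL).flip.comp V.subtypeL
  have hBt : IsCoercive Bt := ⟨c, hc, fun u => by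
    simpa [Bt, pow_two, mul_assoc] using hcoer u u.2⟩
  refine ⟨hBt.continuousLinearEquivOfBilin.symm ⟨φ, hφ⟩, Submodule.coe_mem _, fun u hu => ?_⟩
  simpa [Bt] using hBt.continuousLinearEquivOfBilin_apply
    (hBt.continuousLinearEquivOfBilin.symm ⟨φ, hφ⟩) ⟨u, hu⟩

end Hilbert

/-- Abstract Runge approximation. Let `H` be a real Hilbert space,
`V` a closed subspace, `W` a subspace, and `B = L + q` with `L, q` bounded bilinear forms,
`B` coercive on `V`. Assume (a) locality: `q(w, φ) = 0` for `w ∈ W`, `φ ∈ V`, and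
(b) right UCP: if `φ ∈ V` and `L(w, φ) = 0` for all `w ∈ W` then `φ = 0`. If `sol f`
denotes the solution with `sol f - f ∈ V` and `B(sol f, ·) = 0` on `V` for `f ∈ W`,
then `{ sol f - f : f ∈ W }` is dense in `V`. -/
theorem abstract_runge_approximation {H : Type*} [NormedAddCommGroup H]
    [InnerProductSpace ℝ H] [CompleteSpace H]
    (V : Submodule ℝ H) (hV : IsClosed (V : Set H))
    (W : Submodule ℝ H)
    (L q : H →L[ℝ] H →L[ℝ] ℝ)
    (c : ℝ) (hc : 0 < c) (hcoer : ∀ v ∈ V, c * ‖v‖ ^ 2 ≤ L v v + q v v)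
    (hlocal : ∀ w ∈ W, ∀ φ ∈ V, q w φ = 0)
    (hUCP : ∀ φ ∈ V, (∀ w ∈ W, L w φ = 0) → φ = 0)
    (sol : H → H)
    (hsol : ∀ f ∈ W, sol f - f ∈ V ∧ ∀ φ ∈ V, L (sol f) φ + q (sol f) φ = 0) :
    ∀ v ∈ V, v ∈ closure {x : H | ∃ f ∈ W, x = sol f - f} := by
  obtain ⟨R, hR⟩ := exists_submodule_coe_eq_solution_sub (B := L + q) hc hcoer hsol
  have hRV : R ≤ V := by
    intro x hx
    rw [← SetLike.mem_coe, hR] at hx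
    obtain ⟨f, hf, rfl⟩ := hx
    exact (hsol f hf).1
  have hR_perp : Rᗮ ⊓ V = ⊥ := by
    refine (Submodule.eq_bot_iff _).mpr fun φ ⟨hφR, hφV⟩ => ?_
    obtain ⟨ψ, hψV, hψ⟩ := exists_mem_forall_inner_eq_of_coercive (B := L + q) hV hc hcoer hφV
    have hψ0 : ψ = 0 := hUCP ψ hψV fun w hw => by
      have hr : sol w - w ∈ R := by rw [← SetLike.mem_coe, hR]; exact ⟨w, hw, rfl⟩
      have h := hψ _ (hRV hr)
      rw [real_inner_comm, Submodule.inner_right_of_mem_orthogonal hr hφR] at h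
      simp only [map_sub, sub_apply, add_apply] at h
      linarith [(hsol w hw).2 ψ hψV, hlocal w hw ψ hψV]
    simpa [hψ0] using hψ φ hφV
  rw [← hR]
  exact Submodule.le_topologicalClosure_of_inf_orthogonal_eq_bot hV hRV hR_perp
end
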